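/- Let Λ be a topological space, X and Y compact metric spaces, and let φ : ℝ≥0 × X × Λ → X and ψ : ℝ≥0 × Y × Λ → Y be parametrized dynamical systems over Λ. Suppose h : Λ × X → Y is a conjugacy between them: h is continuous; for each λ ∈ Λ, h^λ = h(λ,·) : X → Y is a homeomorphism and there is a continuous reparametrization τ^λ : ℝ≥0 × X → ℝ≥0 with τ^λ(0,x) = 0, t ↦ τ^λ(t,x) strictly increasing and bijective onto ℝ≥0 for each x, and h^λ(φ^λ(t,x)) = ψ^λ(τ^λ(t,x), h^λ(x)) for all t, x; and for every connected component X_i of X there is a connected component Y_i of Y with h^λ(X_i) = Y_i for all λ ∈ Λ simultaneously. Then the map (λ, A) ↦ (λ, h^λ(A)) is a homeomorphism from the attractor étalé space of φ over Λ onto the attractor étalé space of ψ over Λ. -/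

import Mathlib

/-!
A time change that diverges uniformly on the compact space `X` does not change ω-limit sets, so
each `h^λ` carries the ω-limit sets, attracting neighbourhoods and attractors of `φ^λ` onto those
of `ψ^λ`. Attracting neighbourhoods are robust: if `ω(U) ⊆ int U` for `ψ^{λ₀}`, then for all `λ`
near `λ₀` the times in some `[T, 2T]`, hence all times `≥ T`, carry a uniform neighbourhood of `U`
into a closed set `C` deep inside `U`. Every set between `C` and that neighbourhood, such as
`h^λ ((h^{λ₀})⁻¹ U)`, is then an attracting neighbourhood of `ψ^λ` with the same ω-limit set as
`U`, which makes `(λ, A) ↦ (λ, h^λ A)` continuous. By compactness of `X` the fibrewise inverse of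
`h` is again jointly continuous, so the same argument applies to the inverse map.
-/

open Set Topology NNReal TopologicalSpace

/-- The ω-limit set of `U` under a dynamical system `θ`. -/
def omegaLim {X : Type*} [TopologicalSpace X] (θ : ℝ≥0 × X → X) (U : Set X) : Set X :=
  ⋂ t : ℝ≥0, closure (⋃ s : ℝ≥0, ⋃ _ : t ≤ s, (fun x => θ (s, x)) '' U)

/-- The sliceDS `φ^λ` of a parametrized system `φ : ℝ≥0 × X × Λ → X`. -/
def sliceDS {X Λ : Type*} (φ : ℝ≥0 × X × Λ → X) (l : Λ) : ℝ≥0 × X → X :=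
  fun p => φ (p.1, p.2, l)

/-- A parametrized dynamical system over `Λ` on `X` with time `ℝ≥0`. -/
def IsParamDS {X Λ : Type*} [TopologicalSpace X] [TopologicalSpace Λ]
    (φ : ℝ≥0 × X × Λ → X) : Prop :=
  Continuous φ ∧ ∀ l : Λ, (∀ x, sliceDS φ l (0, x) = x) ∧
    ∀ t s x, sliceDS φ l (t, sliceDS φ l (s, x)) = sliceDS φ l (t + s, x)

/-- The attracting neighborhoods of the sliceDS `φ^λ`. -/
def attNbhd {X Λ : Type*} [TopologicalSpace X] (φ : ℝ≥0 × X × Λ → X) (l : Λ) :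
    Set (Set X) :=
  {U : Set X | omegaLim (sliceDS φ l) U ⊆ interior U}

/-- The attractor étalé space of `φ` over `Λ`: pairs `(λ, A)` with `A` an attractor of
`φ^λ`, i.e. `A = ω_{φ^λ}(U)` for some attracting neighborhood `U`. -/
def AttEtale {X Λ : Type*} [TopologicalSpace X] (φ : ℝ≥0 × X × Λ → X) : Type _ :=
  {p : Λ × Set X // p.2 ∈ (fun U => omegaLim (sliceDS φ p.1) U) '' attNbhd φ p.1}

/-- The étalé topology on the attractor étalé space: generated by the sets
`{(λ, ω_{φ^λ}(U)) : λ ∈ Ω}` for `U ⊆ X` and `Ω` open in `Λ` contained in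
`{λ : U is an attracting neighborhood of φ^λ}`. -/
def attEtaleTop {X Λ : Type*} [TopologicalSpace X] [TopologicalSpace Λ]
    (φ : ℝ≥0 × X × Λ → X) : TopologicalSpace (AttEtale φ) :=
  TopologicalSpace.generateFrom
    {V : Set (AttEtale φ) | ∃ (U : Set X) (Ω : Set Λ), IsOpen Ω ∧
      Ω ⊆ {l : Λ | U ∈ attNbhd φ l} ∧
      V = {p : AttEtale φ | p.1.1 ∈ Ω ∧ p.1.2 = omegaLim (sliceDS φ p.1.1) U}}


open Metric Filter Function

attribute [local instance] attEtaleTop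

section OmegaLimit

variable {X : Type*} {θ : ℝ≥0 × X → X}

def tailSet (θ : ℝ≥0 × X → X) (U : Set X) (t : ℝ≥0) : Set X :=
  ⋃ s : ℝ≥0, ⋃ _ : t ≤ s, (fun x => θ (s, x)) '' U

lemma mem_tailSet {U : Set X} {t : ℝ≥0} {y : X} :
    y ∈ tailSet θ U t ↔ ∃ s, t ≤ s ∧ ∃ x ∈ U, θ (s, x) = y := by
  simp [tailSet]

lemma tailSet_antitone (U : Set X) : Antitone (tailSet θ U) := fun _ _ htt' _ hy => by
  obtain ⟨s, hs, hx⟩ := mem_tailSet.1 hy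
  exact mem_tailSet.2 ⟨s, htt'.trans hs, hx⟩

lemma tailSet_mono {U V : Set X} (h : U ⊆ V) (t : ℝ≥0) : tailSet θ U t ⊆ tailSet θ V t :=
  iUnion₂_mono fun _ _ => image_mono h

variable [TopologicalSpace X]

lemma omegaLim_eq_iInter_closure_tailSet (θ : ℝ≥0 × X → X) (U : Set X) :
    omegaLim θ U = ⋂ t, closure (tailSet θ U t) := rfl

lemma omegaLim_mono {U V : Set X} (h : U ⊆ V) : omegaLim θ U ⊆ omegaLim θ V :=
  iInter_mono fun t => closure_mono (tailSet_mono h t)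

lemma omegaLim_subset_of_tailSet_subset {U C : Set X} {T : ℝ≥0} (hC : IsClosed C)
    (h : tailSet θ U T ⊆ C) : omegaLim θ U ⊆ C :=
  (iInter_subset _ T).trans (hC.closure_subset_iff.2 h)

lemma omegaLim_eq_of_mapsTo (hθ : ∀ t s x, θ (t, θ (s, x)) = θ (t + s, x)) {C W : Set X}
    {T : ℝ≥0} (hCW : C ⊆ W) (hWC : MapsTo (fun x => θ (T, x)) W C) :
    omegaLim θ W = omegaLim θ C := by
  refine (omegaLim_mono hCW).antisymm' (iInter_mono' fun t => ⟨t + T, closure_mono ?_⟩)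
  intro y hy
  obtain ⟨s, hs, x, hx, rfl⟩ := mem_tailSet.1 hy
  have hTs : T ≤ s := le_add_self.trans hs
  refine mem_tailSet.2 ⟨s - T, le_tsub_of_add_le_right hs, θ (T, x), hWC hx, ?_⟩
  rw [hθ, tsub_add_cancel_of_le hTs]

lemma exists_closure_tailSet_subset [CompactSpace X] {U O : Set X} (hO : IsOpen O)
    (h : omegaLim θ U ⊆ O) : ∃ T > 0, closure (tailSet θ U T) ⊆ O := by
  obtain ⟨t, ht⟩ := hO.isClosed_compl.isCompact.elim_directed_family_closed
    (fun t => closure (tailSet θ U t)) (fun _ => isClosed_closure)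
    (disjoint_compl_left.mono_right h).inter_eq
    (show Antitone fun t => closure (tailSet θ U t) from
      fun _ _ htt' => closure_mono (tailSet_antitone U htt')).directed_ge
  refine ⟨t + 1, by positivity, (closure_mono (tailSet_antitone U le_self_add)).trans ?_⟩
  exact disjoint_compl_left_iff_subset.1 (disjoint_iff_inter_eq_empty.2 ht)

lemma image_Icc_prod_closure_subset_closure_tailSet (hθ : Continuous θ) (U : Set X)
    (T T' : ℝ≥0) : θ '' (Icc T T' ×ˢ closure U) ⊆ closure (tailSet θ U T) :=
  calc θ '' (Icc T T' ×ˢ closure U) = θ '' closure (Icc T T' ×ˢ U) := by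
        rw [closure_prod_eq, closure_Icc]
    _ ⊆ closure (θ '' (Icc T T' ×ˢ U)) := image_closure_subset_closure_image hθ
    _ ⊆ closure (tailSet θ U T) := closure_mono <| by
        rintro _ ⟨⟨s, x⟩, ⟨hs, hx⟩, rfl⟩
        exact mem_tailSet.2 ⟨s, hs.1, x, hx, rfl⟩

lemma exists_forall_le_of_monotone [CompactSpace X] {τ : ℝ≥0 × X → ℝ≥0} (hτc : Continuous τ)
    (hτm : ∀ x, Monotone fun t => τ (t, x)) {r : ℝ≥0} (hτ : ∀ x, ∃ t, r < τ (t, x)) :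
    ∃ t, ∀ x, r ≤ τ (t, x) := by
  choose t ht using hτ
  obtain ⟨F, hF⟩ := isCompact_univ.elim_finite_subcover (fun x => {x' | r < τ (t x, x')})
    (fun x => isOpen_lt continuous_const (hτc.comp (Continuous.prodMk_right (t x))))
    (fun x _ => mem_iUnion.2 ⟨x, ht x⟩)
  refine ⟨F.sup t, fun x => ?_⟩
  obtain ⟨y, hyF, hy⟩ := mem_iUnion₂.1 (hF (mem_univ x))
  exact hy.le.trans (hτm x (F.le_sup hyF))

lemma Homeomorph.image_omegaLim_of_conj {Y : Type*} [TopologicalSpace Y] [CompactSpace X]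
    (g : X ≃ₜ Y) {η : ℝ≥0 × Y → Y} {τ : ℝ≥0 × X → ℝ≥0} (hτc : Continuous τ)
    (hτm : ∀ x, Monotone fun t => τ (t, x)) (hτs : ∀ x, Surjective fun t => τ (t, x))
    (hconj : ∀ t x, g (θ (t, x)) = η (τ (t, x), g x)) (U : Set X) :
    g '' omegaLim θ U = omegaLim η (g '' U) := by
  have early : ∀ r, ∃ t, g '' tailSet θ U t ⊆ tailSet η (g '' U) r := by
    intro r
    obtain ⟨t, ht⟩ := exists_forall_le_of_monotone hτc hτm fun x =>
      (hτs x (r + 1)).imp fun _ h => h ▸ lt_add_one r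
    refine ⟨t, ?_⟩
    rintro _ ⟨_, hy, rfl⟩
    obtain ⟨s, hs, x, hx, rfl⟩ := mem_tailSet.1 hy
    exact mem_tailSet.2 ⟨τ (s, x), (ht x).trans (hτm x hs), g x, mem_image_of_mem g hx,
      (hconj s x).symm⟩
  -- `τ (t, ·)` is bounded on the compact space `X`, so late `η`-times come from times `≥ t`
  have late : ∀ t, ∃ r, tailSet η (g '' U) r ⊆ g '' tailSet θ U t := by
    intro t
    obtain ⟨r, hr⟩ := (isCompact_range (hτc.comp (Continuous.prodMk_right t))).bddAbove
    refine ⟨r + 1, fun y hy => ?_⟩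
    obtain ⟨s', hs, _, ⟨x, hx, rfl⟩, rfl⟩ := mem_tailSet.1 hy
    obtain ⟨s, rfl⟩ := hτs x s'
    have hts : t ≤ s := by
      by_contra! hst
      exact (hs.trans ((hτm x hst.le).trans (hr ⟨x, rfl⟩))).not_gt (lt_add_one r)
    exact ⟨θ (s, x), mem_tailSet.2 ⟨s, hts, x, hx, rfl⟩, hconj s x⟩
  calc g '' omegaLim θ U = ⋂ t, closure (g '' tailSet θ U t) := by
        rw [omegaLim_eq_iInter_closure_tailSet, image_iInter g.bijective]
        simp_rw [g.image_closure]
    _ = omegaLim η (g '' U) := by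
        refine (iInter_mono' fun r => ?_).antisymm (iInter_mono' fun t => ?_)
        · obtain ⟨t, ht⟩ := early r
          exact ⟨t, closure_mono ht⟩
        · obtain ⟨r, hr⟩ := late t
          exact ⟨r, closure_mono hr⟩

end OmegaLimit

section Absorption

variable {X : Type*} {θ : ℝ≥0 × X → X}

lemma mapsTo_of_mapsTo_Icc (hθ : ∀ t s x, θ (t, θ (s, x)) = θ (t + s, x)) {V C : Set X}
    (hCV : C ⊆ V) {T : ℝ≥0} (hT : 0 < T)
    (h : ∀ s ∈ Icc T (2 * T), MapsTo (fun x => θ (s, x)) V C) {s : ℝ≥0} (hs : T ≤ s) :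
    MapsTo (fun x => θ (s, x)) V C := by
  suffices ∀ n : ℕ, ∀ s ∈ Icc T (n * T), MapsTo (fun x => θ (s, x)) V C by
    obtain ⟨n, hn⟩ := Archimedean.arch s hT
    exact this n s ⟨hs, by rwa [← nsmul_eq_mul]⟩
  intro n
  induction n with
  | zero => exact fun s hs => absurd (hs.1.trans (by simpa using hs.2)) hT.not_ge
  | succ n ih =>
    rintro s ⟨hTs, hsn⟩ x hx
    rcases le_or_gt s (2 * T) with hs2 | hs2
    · exact h s ⟨hTs, hs2⟩ hx
    · have hsplit : θ (s, x) = θ (s - T, θ (T, x)) := by rw [hθ, tsub_add_cancel_of_le hTs]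
      rw [Nat.cast_succ, add_one_mul] at hsn
      rw [two_mul] at hs2
      show θ (s, x) ∈ C
      rw [hsplit]
      exact ih (s - T) ⟨le_tsub_of_add_le_left hs2.le, tsub_le_iff_right.2 hsn⟩
        (hCV (h T ⟨le_rfl, le_mul_of_one_le_left T.2 one_le_two⟩ hx))

lemma omegaLim_eq_and_subset_of_absorbing [TopologicalSpace X]
    (hθ : ∀ t s x, θ (t, θ (s, x)) = θ (t + s, x)) {C V W : Set X} (hC : IsClosed C)
    (hCW : C ⊆ W) (hWV : W ⊆ V) {T : ℝ≥0} (habs : ∀ s, T ≤ s → MapsTo (fun x => θ (s, x)) V C) :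
    omegaLim θ W = omegaLim θ C ∧ omegaLim θ W ⊆ C := by
  refine ⟨omegaLim_eq_of_mapsTo hθ hCW ((habs T le_rfl).mono_left hWV),
    omegaLim_subset_of_tailSet_subset (T := T) hC fun y hy => ?_⟩
  obtain ⟨s, hs, x, hx, rfl⟩ := mem_tailSet.1 hy
  exact habs s hs (hWV hx)

end Absorption

section Robustness

variable {Λ Y : Type*} [TopologicalSpace Λ] [MetricSpace Y] [CompactSpace Y]
  {ψ : ℝ≥0 × Y × Λ → Y}

lemma exists_absorbing_of_mem_attNbhd (hψc : Continuous ψ) {l₀ : Λ} {U : Set Y}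
    (hU : U ∈ attNbhd ψ l₀) :
    ∃ T > 0, ∃ ε > 0, ∃ C : Set Y, IsClosed C ∧ cthickening ε C ⊆ interior U ∧
      ∀ᶠ l in 𝓝 l₀, ∀ s ∈ Icc T (2 * T),
        MapsTo (fun x => sliceDS ψ l (s, x)) (cthickening ε U) C := by
  obtain ⟨T, hT, hTU⟩ := exists_closure_tailSet_subset isOpen_interior hU
  set K : Set (ℝ≥0 × Y) := Icc T (2 * T) ×ˢ closure U
  have hK : IsCompact K := isCompact_Icc.prod isClosed_closure.isCompact
  have hψl₀ : Continuous (sliceDS ψ l₀) := hψc.comp (by fun_prop)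
  have hKU : sliceDS ψ l₀ '' K ⊆ interior U :=
    (image_Icc_prod_closure_subset_closure_tailSet hψl₀ U T (2 * T)).trans hTU
  obtain ⟨δ, hδ, hδU⟩ := (hK.image hψl₀).exists_cthickening_subset_open isOpen_interior hKU
  obtain ⟨Ω, V, hΩ, hV, hl₀, hKV, hΩV⟩ := generalized_tube_lemma isCompact_singleton hK
    (isOpen_thickening (δ := δ / 2) (E := sliceDS ψ l₀ '' K).preimage
      (show Continuous fun q : Λ × (ℝ≥0 × Y) => ψ (q.2.1, q.2.2, q.1) by fun_prop))
    (by rintro ⟨l, p⟩ ⟨rfl, hp⟩; exact self_subset_thickening (half_pos hδ) _ ⟨p, hp, rfl⟩)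
  obtain ⟨η, hη, hηV⟩ := hK.exists_thickening_subset_open hV hKV
  set ε := min (η / 2) (δ / 2)
  have hε : 0 < ε := by positivity
  refine ⟨T, hT, ε, hε, cthickening (δ / 2) (sliceDS ψ l₀ '' K), isClosed_cthickening, ?_, ?_⟩
  · calc cthickening ε (cthickening (δ / 2) (sliceDS ψ l₀ '' K))
          ⊆ cthickening (ε + δ / 2) (sliceDS ψ l₀ '' K) :=
          cthickening_cthickening_subset hε.le (by positivity) _
      _ ⊆ cthickening δ (sliceDS ψ l₀ '' K) :=
          cthickening_mono (by linarith [min_le_right (η / 2) (δ / 2)]) _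
      _ ⊆ interior U := hδU
  · filter_upwards [hΩ.mem_nhds (hl₀ rfl)] with l hl s hs x hx
    obtain ⟨x', hx', hxx'⟩ := mem_thickening_iff.1 <| cthickening_subset_thickening' hη
      (by linarith [min_le_left (η / 2) (δ / 2)]) U hx
    have hsx : (s, x) ∈ V := hηV <| mem_thickening_iff.2
      ⟨(s, x'), ⟨hs, subset_closure hx'⟩, by simpa [Prod.dist_eq] using hxx'⟩
    exact thickening_subset_cthickening _ _ (@hΩV (l, s, x) ⟨hl, hsx⟩)

lemma exists_eventually_omegaLim_image_eq (hψ : IsParamDS ψ) {l₀ : Λ} {U : Set Y}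
    (hU : U ∈ attNbhd ψ l₀) :
    ∃ ε > 0, ∀ᶠ l in 𝓝 l₀, ∀ g : Y ≃ₜ Y, (∀ y, dist (g y) y ≤ ε) →
      omegaLim (sliceDS ψ l) (g '' U) = omegaLim (sliceDS ψ l) U ∧ g '' U ∈ attNbhd ψ l := by
  obtain ⟨T, hT, ε, hε, C, hC, hCU, hev⟩ := exists_absorbing_of_mem_attNbhd hψ.1 hU
  refine ⟨ε, hε, hev.mono fun l hl g hg => ?_⟩
  have hflow := (hψ.2 l).2
  have hCint : C ⊆ interior U := (self_subset_cthickening C).trans hCU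
  have hUε : U ⊆ cthickening ε U := self_subset_cthickening U
  have habs := fun s hs =>
    mapsTo_of_mapsTo_Icc hflow (hCint.trans (interior_subset.trans hUε)) hT hl (s := s) hs
  have hgU : g '' U ⊆ cthickening ε U := by
    rintro _ ⟨x, hx, rfl⟩
    exact mem_cthickening_of_dist_le _ x ε U hx (hg x)
  have hCg : C ⊆ interior (g '' U) := by
    rw [← g.image_interior]
    refine fun z hz =>
      ⟨g.symm z, hCU (mem_cthickening_of_dist_le _ z ε C hz ?_), g.apply_symm_apply z⟩
    simpa [dist_comm] using hg (g.symm z)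
  obtain ⟨hgUC, hgUsub⟩ :=
    omegaLim_eq_and_subset_of_absorbing hflow hC (hCg.trans interior_subset) hgU habs
  obtain ⟨hUC, -⟩ :=
    omegaLim_eq_and_subset_of_absorbing hflow hC (hCint.trans interior_subset) hUε habs
  exact ⟨hgUC.trans hUC.symm, hgUsub.trans hCg⟩

end Robustness

lemma eventually_forall_dist_lt {Λ X Y : Type*} [TopologicalSpace Λ] [TopologicalSpace X]
    [CompactSpace X] [PseudoMetricSpace Y] {h : Λ × X → Y} (hh : Continuous h) (l₀ : Λ)
    {ε : ℝ} (hε : 0 < ε) : ∀ᶠ l in 𝓝 l₀, ∀ x, dist (h (l, x)) (h (l₀, x)) < ε := by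
  filter_upwards [Metric.tendsto_nhds.1
    ((ContinuousMap.curry ⟨h, hh⟩).continuous.tendsto l₀) ε hε] with l hl x
  exact (ContinuousMap.dist_apply_le_dist x).trans_lt hl

lemma continuous_symm_of_continuous_uncurry {Λ X Y : Type*} [TopologicalSpace Λ]
    [TopologicalSpace X] [CompactSpace X] [TopologicalSpace Y] [T2Space Y] {e : Λ → X ≃ₜ Y}
    (he : Continuous fun q : Λ × X => e q.1 q.2) :
    Continuous fun q : Λ × Y => (e q.1).symm q.2 := by
  refine continuous_iff_isClosed.2 fun F hF => ?_
  have hgraph : (fun q : Λ × Y => (e q.1).symm q.2) ⁻¹' F =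
      Prod.fst '' {r : (Λ × Y) × X | r.2 ∈ F ∧ e r.1.1 r.2 = r.1.2} := by
    ext ⟨l, y⟩
    simp only [mem_preimage, mem_image, mem_ofPred_eq, Prod.exists, Prod.mk.injEq]
    exact ⟨fun hy => ⟨l, y, _, ⟨hy, (e l).apply_symm_apply y⟩, rfl, rfl⟩,
      by rintro ⟨_, _, x, ⟨hx, rfl⟩, rfl, rfl⟩; simpa using hx⟩
  rw [hgraph]
  exact isClosedMap_fst_of_compactSpace _ ((hF.preimage continuous_snd).inter
    (isClosed_eq (he.comp (by fun_prop : Continuous fun r : (Λ × Y) × X => (r.1.1, r.2)))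
      (by fun_prop)))

section AttractorEtale

variable {Λ X Y : Type*} [TopologicalSpace X] [TopologicalSpace Y]
  {φ : ℝ≥0 × X × Λ → X} {ψ : ℝ≥0 × Y × Λ → Y} {e : Λ → X ≃ₜ Y}

def PreservesOmegaLim (φ : ℝ≥0 × X × Λ → X) (ψ : ℝ≥0 × Y × Λ → Y) (e : Λ → X ≃ₜ Y) : Prop :=
  ∀ l U, e l '' omegaLim (sliceDS φ l) U = omegaLim (sliceDS ψ l) (e l '' U)

lemma preservesOmegaLim_of_conj [CompactSpace X]
    (hconj : ∀ l, ∃ τ : ℝ≥0 × X → ℝ≥0, Continuous τ ∧ (∀ x, Monotone fun t => τ (t, x)) ∧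
      (∀ x, Surjective fun t => τ (t, x)) ∧
      ∀ t x, e l (sliceDS φ l (t, x)) = sliceDS ψ l (τ (t, x), e l x)) :
    PreservesOmegaLim φ ψ e := fun l U => by
  obtain ⟨τ, hτc, hτm, hτs, hτ⟩ := hconj l
  exact (e l).image_omegaLim_of_conj hτc hτm hτs hτ U

namespace PreservesOmegaLim

lemma symm (he : PreservesOmegaLim φ ψ e) : PreservesOmegaLim ψ φ fun l => (e l).symm :=
    fun l V => by
  have hV : e l '' ((e l).symm '' V) = V := (e l).toEquiv.image_symm_image V
  have hω := he l ((e l).symm '' V)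
  rw [hV] at hω
  rw [← hω]
  exact (e l).toEquiv.symm_image_image _

lemma image_mem_attNbhd (he : PreservesOmegaLim φ ψ e) {l : Λ} {U : Set X}
    (hU : U ∈ attNbhd φ l) : e l '' U ∈ attNbhd ψ l := by
  show omegaLim _ _ ⊆ interior _
  rw [← he l U, ← (e l).image_interior]
  exact image_mono hU

end PreservesOmegaLim

def attEtaleMap (e : Λ → X ≃ₜ Y) (he : PreservesOmegaLim φ ψ e) : AttEtale φ → AttEtale ψ :=
  fun p => ⟨(p.1.1, e p.1.1 '' p.1.2), by
    obtain ⟨U, hU, hA⟩ := p.2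
    exact ⟨e p.1.1 '' U, he.image_mem_attNbhd hU, (he _ U).symm.trans (congrArg _ hA)⟩⟩

lemma attEtaleMap_symm_apply (he : PreservesOmegaLim φ ψ e) (p : AttEtale φ) :
    attEtaleMap _ he.symm (attEtaleMap e he p) = p :=
  Subtype.ext <| Prod.ext rfl <| (e p.1.1).toEquiv.symm_image_image p.1.2

lemma attEtaleMap_apply_symm (he : PreservesOmegaLim φ ψ e) (p : AttEtale ψ) :
    attEtaleMap e he (attEtaleMap _ he.symm p) = p :=
  Subtype.ext <| Prod.ext rfl <| (e p.1.1).toEquiv.image_symm_image p.1.2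

end AttractorEtale

lemma continuous_attEtaleMap {Λ X Y : Type*} [TopologicalSpace Λ] [MetricSpace X]
    [CompactSpace X] [MetricSpace Y] [CompactSpace Y] {φ : ℝ≥0 × X × Λ → X}
    {ψ : ℝ≥0 × Y × Λ → Y} (hψ : IsParamDS ψ) {e : Λ → X ≃ₜ Y}
    (hec : Continuous fun q : Λ × X => e q.1 q.2) (he : PreservesOmegaLim φ ψ e) :
    Continuous (attEtaleMap e he) := by
  refine continuous_generateFrom_iff.2 ?_
  rintro _ ⟨U, Ω, hΩ, hΩU, rfl⟩
  refine isOpen_iff_forall_mem_open.2 fun p ⟨hpΩ, hpA⟩ => ?_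
  set l₀ := p.1.1
  set W := (e l₀).symm '' U
  have hW : e l₀ '' W = U := (e l₀).toEquiv.image_symm_image U
  obtain ⟨ε, hε, hrobust⟩ := exists_eventually_omegaLim_image_eq hψ (hΩU hpΩ)
  -- near `l₀`, `e l '' W` is the image of `U` under the homeomorphism `e l ∘ (e l₀)⁻¹ ≈ id`
  have hnear : ∀ᶠ l in 𝓝 l₀, l ∈ Ω ∧
      omegaLim (sliceDS ψ l) (e l '' W) = omegaLim (sliceDS ψ l) U ∧ e l '' W ∈ attNbhd ψ l := by
    filter_upwards [hΩ.mem_nhds hpΩ, hrobust, eventually_forall_dist_lt hec l₀ hε]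
      with l hlΩ hl hclose
    have hg : (e l₀).symm.trans (e l) '' U = e l '' W := (image_image (e l) (e l₀).symm U).symm
    rw [← hg]
    exact ⟨hlΩ, hl _ fun y => by simpa using (hclose ((e l₀).symm y)).le⟩
  obtain ⟨Ω', hΩ'near, hΩ', hl₀⟩ := mem_nhds_iff.1 hnear
  have hWatt : ∀ l ∈ Ω', W ∈ attNbhd φ l := fun l hl => by
    have hWl : (e l).symm '' (e l '' W) = W := (e l).toEquiv.symm_image_image W
    simpa only [hWl] using he.symm.image_mem_attNbhd (hΩ'near hl).2.2
  refine ⟨{q | q.1.1 ∈ Ω' ∧ q.1.2 = omegaLim (sliceDS φ q.1.1) W}, ?_,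
    isOpen_generateFrom_of_mem ⟨W, Ω', hΩ', hWatt, rfl⟩, hl₀, ?_⟩
  · rintro q ⟨hq, hqA⟩
    obtain ⟨hqΩ, hqU, -⟩ := hΩ'near hq
    refine ⟨hqΩ, ?_⟩
    show e q.1.1 '' q.1.2 = _
    rw [hqA, he, hqU]
    rfl
  · apply (e l₀).injective.image_injective
    rw [he, hW]
    exact hpA

theorem stmt18_general {Λ X Y : Type*} [TopologicalSpace Λ]
    [MetricSpace X] [CompactSpace X] [MetricSpace Y] [CompactSpace Y]
    (φ : ℝ≥0 × X × Λ → X) (ψ : ℝ≥0 × Y × Λ → Y)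
    (hφ : IsParamDS φ) (hψ : IsParamDS ψ)
    (h : Λ × X → Y) (hhc : Continuous h)
    (hhomeo : ∀ l : Λ, IsHomeomorph fun x => h (l, x))
    (hconj : ∀ l : Λ, ∃ τ : ℝ≥0 × X → ℝ≥0, Continuous τ ∧ (∀ x, τ (0, x) = 0) ∧
      (∀ x, StrictMono fun t => τ (t, x)) ∧
      (∀ x, Function.Surjective fun t => τ (t, x)) ∧
      ∀ t x, h (l, sliceDS φ l (t, x)) = sliceDS ψ l (τ (t, x), h (l, x))) :
    letI : TopologicalSpace (AttEtale φ) := attEtaleTop φ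
    letI : TopologicalSpace (AttEtale ψ) := attEtaleTop ψ
    ∃ H : AttEtale φ → AttEtale ψ, IsHomeomorph H ∧
      ∀ p : AttEtale φ, (H p).1 = (p.1.1, (fun x => h (p.1.1, x)) '' p.1.2) := by
  choose e he using fun l => isHomeomorph_iff_exists_homeomorph.1 (hhomeo l)
  have hec : Continuous fun q : Λ × X => e q.1 q.2 := by simpa [he] using hhc
  have hpres : PreservesOmegaLim φ ψ e := preservesOmegaLim_of_conj fun l => by
    obtain ⟨τ, hτc, -, hτm, hτs, hτ⟩ := hconj l
    exact ⟨τ, hτc, fun x => (hτm x).monotone, hτs, by simpa [he] using hτ⟩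
  refine ⟨attEtaleMap e hpres, ?_, fun p => by simp [attEtaleMap, he]⟩
  exact isHomeomorph_iff_exists_inverse.2 ⟨continuous_attEtaleMap hψ hec hpres, _,
    attEtaleMap_symm_apply hpres, attEtaleMap_apply_symm hpres,
    continuous_attEtaleMap hφ (continuous_symm_of_continuous_uncurry hec) hpres.symm⟩

/-- Conjugacy Invariance Theorem: if `φ` and `ψ` are conjugate parametrized dynamical
systems over `Λ` on compact metric spaces `X`, `Y` — via a continuous `h : Λ × X → Y`
such that each `h^λ` is a homeomorphism conjugating `φ^λ` to `ψ^λ` (with continuous time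
reparametrization), and `h^λ` maps each connected component of `X` onto a fixed connected
component of `Y` uniformly in `λ` — then the attractor étalé spaces of `φ` and `ψ` over `Λ`
are homeomorphic via `(λ, A) ↦ (λ, h^λ(A))`. -/
theorem stmt18 {Λ X Y : Type*} [TopologicalSpace Λ]
    [MetricSpace X] [CompactSpace X] [MetricSpace Y] [CompactSpace Y]
    (φ : ℝ≥0 × X × Λ → X) (ψ : ℝ≥0 × Y × Λ → Y)
    (hφ : IsParamDS φ) (hψ : IsParamDS ψ)
    (h : Λ × X → Y) (hhc : Continuous h)
    (hhomeo : ∀ l : Λ, IsHomeomorph fun x => h (l, x))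
    (hconj : ∀ l : Λ, ∃ τ : ℝ≥0 × X → ℝ≥0, Continuous τ ∧ (∀ x, τ (0, x) = 0) ∧
      (∀ x, StrictMono fun t => τ (t, x)) ∧
      (∀ x, Function.Surjective fun t => τ (t, x)) ∧
      ∀ t x, h (l, sliceDS φ l (t, x)) = sliceDS ψ l (τ (t, x), h (l, x)))
    (hcomp : ∀ x : X, ∃ y : Y, ∀ l : Λ,
      (fun x' => h (l, x')) '' connectedComponent x = connectedComponent y) :
    letI : TopologicalSpace (AttEtale φ) := attEtaleTop φ
    letI : TopologicalSpace (AttEtale ψ) := attEtaleTop ψ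
    ∃ H : AttEtale φ → AttEtale ψ, IsHomeomorph H ∧
      ∀ p : AttEtale φ, (H p).1 = (p.1.1, (fun x => h (p.1.1, x)) '' p.1.2) :=
  stmt18_general φ ψ hφ hψ h hhc hhomeo hconj
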